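/- arXiv:0909.3375 — 3 statements merged into one kernel-verified Lean document; each statement's English description precedes it below -/
import Mathlib

section
/- Let E be a linear operator on a finite-dimensional complex vector space V, and let S ⊆ V be a set of eigenvectors of E that spans V. Suppose that for any two vectors u, v ∈ S there is a finite chain u = w_0, w_1, ..., w_m = v in S such that consecutive elements w_l, w_{l+1} appear together in some linear dependence w = α·w_l + β·w_{l+1} + γ·w'' with all of w, w_l, w_{l+1}, w'' in S, the three vectors w_l, w_{l+1}, w'' linearly independent, and α, β, γ all nonzero. Then all eigenvalues of vectors in S coincide and E is a scalar multiple of the identity. -/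
/-
Let `w₁, w₂, c` have eigenvalues `μ₁, μ₂, ν` and `a` the eigenvalue `μ`. Comparing `E a = μ • a`
with `E` applied termwise to `a = α • w₁ + β • w₂ + γ • c` gives a linear relation among the
independent vectors `w₁, w₂, c` with coefficients `α (μ₁ - μ)`, `β (μ₂ - μ)`, `γ (ν - μ)`; as
`α, β ≠ 0`, this forces `μ₁ = μ = μ₂`. Hence eigenvalues agree along every step of a chain, so
they are constant on `S`, and a map acting by the same scalar on a spanning set is that scalar
times the identity.
-/

theorem eigenvalue_eq_of_linearIndependent_of_apply_sum
    {R V ι : Type*} [CommRing R] [NoZeroDivisors R] [AddCommGroup V] [Module R V] [Fintype ι]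
    {E : V →ₗ[R] V} {v : ι → V} (hv : LinearIndependent R v) {eig : ι → R}
    (hE : ∀ i, E (v i) = eig i • v i) {c : ι → R} {μ : R}
    (hμ : E (∑ i, c i • v i) = μ • ∑ i, c i • v i) {i : ι} (hi : c i ≠ 0) :
    eig i = μ := by
  have hrel : ∑ j, (c j * (eig j - μ)) • v j = 0 := by
    simp only [map_sum, map_smul, hE, Finset.smul_sum, smul_smul] at hμ
    simp only [mul_sub, sub_smul, Finset.sum_sub_distrib, hμ, mul_comm μ, sub_self]
  have hzero := Fintype.linearIndependent_iff.mp hv _ hrel i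
  exact sub_eq_zero.mp ((mul_eq_zero.mp hzero).resolve_left hi)

theorem eigenvalue_eq_of_linearIndependent_triple
    {R V : Type*} [CommRing R] [NoZeroDivisors R] [AddCommGroup V] [Module R V]
    {E : V →ₗ[R] V} {w₁ w₂ c a : V} {μ₁ μ₂ ν μ α β γ : R}
    (hli : LinearIndependent R ![w₁, w₂, c])
    (h₁ : E w₁ = μ₁ • w₁) (h₂ : E w₂ = μ₂ • w₂) (hc : E c = ν • c) (ha : E a = μ • a)
    (hα : α ≠ 0) (hβ : β ≠ 0) (hcomb : a = α • w₁ + β • w₂ + γ • c) :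
    μ₁ = μ₂ := by
  have hE : ∀ i, E (![w₁, w₂, c] i) = ![μ₁, μ₂, ν] i • ![w₁, w₂, c] i := by
    intro i; fin_cases i <;> assumption
  have hsum : a = ∑ i, ![α, β, γ] i • ![w₁, w₂, c] i := by
    simp [Fin.sum_univ_three, hcomb]
  rw [hsum] at ha
  exact (eigenvalue_eq_of_linearIndependent_of_apply_sum hli hE ha (i := 0) hα).trans
    (eigenvalue_eq_of_linearIndependent_of_apply_sum hli hE ha (i := 1) hβ).symm

theorem Fin.apply_zero_eq_apply_last_of_forall_castSucc {α : Type*} {m : ℕ}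
    {f : Fin (m + 1) → α} (hf : ∀ l : Fin m, f l.castSucc = f l.succ) :
    f 0 = f (Fin.last m) := by
  suffices h : ∀ i, f 0 = f i from h _
  intro i
  induction i using Fin.induction with
  | zero => rfl
  | succ j ih => exact ih.trans (hf j)

theorem scalar_of_chain_connected_eigenvectors_general
    (V : Type*) [AddCommGroup V] [Module ℂ V]
    (E : V →ₗ[ℂ] V) (S : Set V) (ev : V → ℂ)
    (hev : ∀ s ∈ S, E s = ev s • s)
    (hspan : Submodule.span ℂ S = ⊤)
    (hchain : ∀ u ∈ S, ∀ v ∈ S, ∃ m : ℕ, ∃ z : Fin (m + 1) → V,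
      (∀ l, z l ∈ S) ∧ z 0 = u ∧ z (Fin.last m) = v ∧
      ∀ l : Fin m, ∃ a ∈ S, ∃ c ∈ S, ∃ α β γ : ℂ, α ≠ 0 ∧ β ≠ 0 ∧ γ ≠ 0 ∧
        LinearIndependent ℂ ![z l.castSucc, z l.succ, c] ∧
        a = α • z l.castSucc + β • z l.succ + γ • c) :
    (∀ u ∈ S, ∀ v ∈ S, ev u = ev v) ∧ ∃ e : ℂ, E = e • LinearMap.id := by
  have hall : ∀ u ∈ S, ∀ v ∈ S, ev u = ev v := by
    intro u hu v hv
    obtain ⟨m, z, hzS, rfl, rfl, hstep⟩ := hchain u hu v hv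
    refine Fin.apply_zero_eq_apply_last_of_forall_castSucc (f := ev ∘ z) fun l => ?_
    obtain ⟨a, ha, c, hc, α, β, γ, hα, hβ, -, hli, hcomb⟩ := hstep l
    exact eigenvalue_eq_of_linearIndependent_triple hli (hev _ (hzS _)) (hev _ (hzS _))
      (hev c hc) (hev a ha) hα hβ hcomb
  obtain ⟨e, he⟩ : ∃ e, ∀ s ∈ S, ev s = e := by
    rcases S.eq_empty_or_nonempty with rfl | ⟨s₀, hs₀⟩
    · exact ⟨0, by simp⟩
    · exact ⟨ev s₀, fun s hs => hall s hs s₀ hs₀⟩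
  refine ⟨hall, e, LinearMap.ext_on hspan fun s hs => ?_⟩
  simp [hev s hs, he s hs]

/-- If a spanning set `S` of eigenvectors of `E` is "chain connected" through linear
dependences `a = α • w_l + β • w_{l+1} + γ • c` with all members in `S`, the triple
`w_l, w_{l+1}, c` linearly independent and `α, β, γ ≠ 0`, then all eigenvalues
coincide and `E` is a scalar multiple of the identity. -/
theorem scalar_of_chain_connected_eigenvectors
    (V : Type*) [AddCommGroup V] [Module ℂ V] [FiniteDimensional ℂ V]
    (E : V →ₗ[ℂ] V) (S : Set V) (ev : V → ℂ)
    (hS0 : ∀ s ∈ S, s ≠ 0)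
    (hev : ∀ s ∈ S, E s = ev s • s)
    (hspan : Submodule.span ℂ S = ⊤)
    (hchain : ∀ u ∈ S, ∀ v ∈ S, ∃ m : ℕ, ∃ z : Fin (m + 1) → V,
      (∀ l, z l ∈ S) ∧ z 0 = u ∧ z (Fin.last m) = v ∧
      ∀ l : Fin m, ∃ a ∈ S, ∃ c ∈ S, ∃ α β γ : ℂ, α ≠ 0 ∧ β ≠ 0 ∧ γ ≠ 0 ∧
        LinearIndependent ℂ ![z l.castSucc, z l.succ, c] ∧
        a = α • z l.castSucc + β • z l.succ + γ • c) :
    (∀ u ∈ S, ∀ v ∈ S, ev u = ev v) ∧ ∃ e : ℂ, E = e • LinearMap.id :=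
  scalar_of_chain_connected_eigenvectors_general V E S ev hev hspan hchain
end

section
/- With safe vectors as defined (⟨η_x, Φ̂_{b}(i)⟩ = δ_{x(b),i} for guessing functions x : {1,...,d+1} → {1,...,d}): if x, u, v, w are guessing functions such that there exist two distinct bases b′, b̃ with x(b′) = v(b′) ≠ u(b′) = w(b′), x(b̃) = u(b̃) ≠ v(b̃) = w(b̃), and x(b) = u(b) = v(b) = w(b) for all other b, and if the projectors {|Φ̂_b(i)⟩⟨Φ̂_b(i)|} span the whole space of operators (so that safe vectors are uniquely determined by their inner products with all Φ̂_b(i)), then η_x = η_u + η_v − η_w. -/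
noncomputable def Omega (d : ℕ) : EuclideanSpace ℂ (Fin d × Fin d) :=
  WithLp.toLp 2 (fun p => if p.1 = p.2 then (((Real.sqrt d)⁻¹ : ℝ) : ℂ) else 0)

noncomputable def idTensor {d : ℕ} (A : Matrix (Fin d) (Fin d) ℂ)
    (ψ : EuclideanSpace ℂ (Fin d × Fin d)) : EuclideanSpace ℂ (Fin d × Fin d) :=
  WithLp.toLp 2 (fun p => ∑ m, A p.2 m * ψ (p.1, m))

noncomputable def projMat {d : ℕ} (φ : EuclideanSpace ℂ (Fin d)) : Matrix (Fin d) (Fin d) ℂ :=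
  Matrix.of fun i j => φ i * (starRingEnd ℂ) (φ j)

/-- `Φ̂ = (1 ⊗ |φ⟩⟨φ|) Ω`. -/
noncomputable def hatPhi {d : ℕ} (φ : EuclideanSpace ℂ (Fin d)) :
    EuclideanSpace ℂ (Fin d × Fin d) :=
  idTensor (projMat φ) (Omega d)

/-! Since `x`, `u`, `v`, `w` agree pairwise at every basis, `x = u, v = w` or `x = v, u = w`, the
indicator of `x b = i` equals that of `u b = i` plus that of `v b = i` minus that of `w b = i`. So
`η_x` and `η_u + η_v - η_w` have the same inner products with every `Φ̂_b(i)`, and these span. -/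

theorem ext_inner_right_of_span_range_eq_top {𝕜 E ι : Type*} [RCLike 𝕜] [NormedAddCommGroup E]
    [InnerProductSpace 𝕜 E] {v : ι → E} (hv : Submodule.span 𝕜 (Set.range v) = ⊤) {x y : E}
    (h : ∀ i, inner 𝕜 x (v i) = inner 𝕜 y (v i)) : x = y :=
  ext_inner_right 𝕜 fun z =>
    LinearMap.congr_fun (LinearMap.ext_on_range (f := innerₛₗ 𝕜 x) (g := innerₛₗ 𝕜 y) hv h) z

theorem apply_eq_add_sub_of_pairing {α G : Type*} [AddCommGroup G] (f : α → G) {a b c e : α}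
    (h : (a = b ∧ c = e) ∨ (a = c ∧ b = e)) : f a = f b + f c - f e := by
  rcases h with ⟨rfl, rfl⟩ | ⟨rfl, rfl⟩ <;> abel

theorem safe_vector_decomposition_general (d : ℕ)
    (Φ : Fin (d + 1) → Fin d → EuclideanSpace ℂ (Fin d))
    (hspan : Submodule.span ℂ
      (Set.range fun p : Fin (d + 1) × Fin d => hatPhi (Φ p.1 p.2)) = ⊤)
    (x u v w : Fin (d + 1) → Fin d)
    (b' bt : Fin (d + 1))
    (h1 : x b' = v b') (h2 : u b' = w b')
    (h4 : x bt = u bt) (h5 : v bt = w bt)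
    (h7 : ∀ b, b ≠ b' → b ≠ bt → (x b = u b ∧ u b = v b ∧ v b = w b))
    (ηx ηu ηv ηw : EuclideanSpace ℂ (Fin d × Fin d))
    (hx : ∀ b i, (inner ℂ ηx (hatPhi (Φ b i)) : ℂ) = if x b = i then 1 else 0)
    (hu : ∀ b i, (inner ℂ ηu (hatPhi (Φ b i)) : ℂ) = if u b = i then 1 else 0)
    (hv : ∀ b i, (inner ℂ ηv (hatPhi (Φ b i)) : ℂ) = if v b = i then 1 else 0)
    (hw : ∀ b i, (inner ℂ ηw (hatPhi (Φ b i)) : ℂ) = if w b = i then 1 else 0) :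
    ηx = ηu + ηv - ηw := by
  have hpair : ∀ b, (x b = u b ∧ v b = w b) ∨ (x b = v b ∧ u b = w b) := by
    intro b
    rcases eq_or_ne b b' with rfl | hb'
    · exact .inr ⟨h1, h2⟩
    rcases eq_or_ne b bt with rfl | hbt
    · exact .inl ⟨h4, h5⟩
    obtain ⟨hxu, -, hvw⟩ := h7 b hb' hbt
    exact .inl ⟨hxu, hvw⟩
  refine ext_inner_right_of_span_range_eq_top hspan fun ⟨b, i⟩ => ?_
  simp only [inner_sub_left, inner_add_left, hx, hu, hv, hw]
  exact apply_eq_add_sub_of_pairing (fun j => if j = i then (1 : ℂ) else 0) (hpair b)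

/-- Under non-degeneracy (the vectors `Φ̂_b(i)` span `H ⊗ H`, so safe vectors are
uniquely determined by their inner products with all `Φ̂_b(i)`), the combinatorial
relation between guessing functions `x, u, v, w` forces `η_x = η_u + η_v - η_w`. -/
theorem safe_vector_decomposition (d : ℕ) (hd : 0 < d)
    (Φ : Fin (d + 1) → Fin d → EuclideanSpace ℂ (Fin d))
    (hΦ : ∀ b, Orthonormal ℂ (Φ b))
    (hspan : Submodule.span ℂ
      (Set.range fun p : Fin (d + 1) × Fin d => hatPhi (Φ p.1 p.2)) = ⊤)
    (x u v w : Fin (d + 1) → Fin d)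
    (b' bt : Fin (d + 1)) (hbb : b' ≠ bt)
    (h1 : x b' = v b') (h2 : u b' = w b') (h3 : x b' ≠ u b')
    (h4 : x bt = u bt) (h5 : v bt = w bt) (h6 : x bt ≠ v bt)
    (h7 : ∀ b, b ≠ b' → b ≠ bt → (x b = u b ∧ u b = v b ∧ v b = w b))
    (ηx ηu ηv ηw : EuclideanSpace ℂ (Fin d × Fin d))
    (hx : ∀ b i, (inner ℂ ηx (hatPhi (Φ b i)) : ℂ) = if x b = i then 1 else 0)
    (hu : ∀ b i, (inner ℂ ηu (hatPhi (Φ b i)) : ℂ) = if u b = i then 1 else 0)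
    (hv : ∀ b i, (inner ℂ ηv (hatPhi (Φ b i)) : ℂ) = if v b = i then 1 else 0)
    (hw : ∀ b i, (inner ℂ ηw (hatPhi (Φ b i)) : ℂ) = if w b = i then 1 else 0) :
    ηx = ηu + ηv - ηw :=
  safe_vector_decomposition_general d Φ hspan x u v w b' bt h1 h2 h4 h5 h7 ηx ηu ηv ηw hx hu hv hw
end

section
/- Let V, W be finite-dimensional complex vector spaces and S ⊆ V, T ⊆ W spanning sets. Suppose E : V ⊗ W → V ⊗ W is a linear operator such that every simple tensor s ⊗ t with s ∈ S, t ∈ T is an eigenvector of E. If additionally any two vectors of S (resp. T) can be connected by a chain of decompositions s = s₁ + s₂ − s₃ into linearly independent elements of S (resp. T) forcing equal eigenvalues, then E is a scalar multiple of the identity on V ⊗ W. -/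
/-!
Fix `t ∈ T`. As `t ≠ 0`, the map `s ↦ s ⊗ t` is injective, so a decomposition `s = s₁ + s₂ - s₃`
into independent vectors of `S` yields an independent triple `sᵢ ⊗ t`, and comparing coefficients in
`E (s ⊗ t)` forces the eigenvalues of `s ⊗ t` and of the three `sᵢ ⊗ t` to agree. Along decomposition
chains the eigenvalue of `s ⊗ t` is hence independent of `s ∈ S`, and symmetrically of `t ∈ T`.
So `E` is one scalar `c` on all `s ⊗ t`, which span `V ⊗ W`.
-/

open scoped TensorProduct

open Function

namespace TensorProduct

variable {R M N : Type*} [CommRing R] [AddCommGroup M] [Module R M] [AddCommGroup N] [Module R N]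

theorem tmul_left_injective [IsDomain R] [Module.Flat R M] [Module.IsTorsionFree R N] {n : N}
    (hn : n ≠ 0) : Injective fun m : M => m ⊗ₜ[R] n := by
  have hfactor : (fun m : M => m ⊗ₜ[R] n) =
      (LinearMap.toSpanSingleton R N n).lTensor M ∘ (TensorProduct.rid R M).symm := by
    ext m; simp
  rw [hfactor]
  exact (Module.Flat.lTensor_preserves_injective_linearMap _
    (LinearMap.ker_eq_bot.mp (LinearMap.ker_toSpanSingleton R hn))).comp (LinearEquiv.injective _)

theorem tmul_right_injective [IsDomain R] [Module.IsTorsionFree R M] [Module.Flat R N] {m : M}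
    (hm : m ≠ 0) : Injective fun n : N => m ⊗ₜ[R] n := by
  have hfactor : (fun n : N => m ⊗ₜ[R] n) =
      (LinearMap.toSpanSingleton R M m).rTensor N ∘ (TensorProduct.lid R N).symm := by
    ext n; simp
  rw [hfactor]
  exact (Module.Flat.rTensor_preserves_injective_linearMap _
    (LinearMap.ker_eq_bot.mp (LinearMap.ker_toSpanSingleton R hm))).comp (LinearEquiv.injective _)

theorem span_image2_tmul_eq_top {S : Set M} {T : Set N} (hS : Submodule.span R S = ⊤)
    (hT : Submodule.span R T = ⊤) : Submodule.span R (Set.image2 (· ⊗ₜ[R] ·) S T) = ⊤ := by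
  have hmap := Submodule.map₂_span_span R (mk R M N) S T
  rw [hS, hT, map₂_mk_top_top_eq_top] at hmap
  exact hmap.symm

end TensorProduct

section DecompositionChains

variable {R M N : Type*} [CommRing R] [AddCommGroup M] [Module R M] [AddCommGroup N] [Module R N]

theorem LinearIndependent.eq_of_smul_add_sub_eq_smul {x : Fin 3 → M} (h : LinearIndependent R x)
    {a : Fin 3 → R} {c : R}
    (hcomb : a 0 • x 0 + a 1 • x 1 - a 2 • x 2 = c • (x 0 + x 1 - x 2)) : ∀ i, a i = c := by
  have hcoeff := Fintype.linearIndependent_iff.mp h ![a 0 - c, a 1 - c, c - a 2] (by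
    simp only [Fin.sum_univ_three, Matrix.cons_val_zero, Matrix.cons_val_one,
      Matrix.cons_val_two, Matrix.tail_cons, Matrix.head_cons]
    linear_combination (norm := module) hcomb)
  intro i
  fin_cases i
  exacts [sub_eq_zero.mp (hcoeff 0), sub_eq_zero.mp (hcoeff 1), (sub_eq_zero.mp (hcoeff 2)).symm]

variable (R) in
def IsDecompositionStep (S : Set M) (a b : M) : Prop :=
  ∃ s ∈ S, ∃ s₁ ∈ S, ∃ s₂ ∈ S, ∃ s₃ ∈ S,
    LinearIndependent R ![s₁, s₂, s₃] ∧ s = s₁ + s₂ - s₃ ∧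
    a ∈ ({s, s₁, s₂, s₃} : Set M) ∧ b ∈ ({s, s₁, s₂, s₃} : Set M)

variable (R) in
def IsDecompositionConnected (S : Set M) : Prop :=
  ∀ u ∈ S, ∀ v ∈ S, ∃ m : ℕ, ∃ z : Fin (m + 1) → M,
    (∀ l, z l ∈ S) ∧ z 0 = u ∧ z (Fin.last m) = v ∧
    ∀ l : Fin m, IsDecompositionStep R S (z l.castSucc) (z l.succ)

theorem IsDecompositionStep.eigenvalue_eq {S : Set M} {a b : M}
    (hab : IsDecompositionStep R S a b) {E : N →ₗ[R] N} {g : M →ₗ[R] N} (hg : Injective g)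
    {μ : M → R} (hμ : ∀ s ∈ S, E (g s) = μ s • g s) : μ a = μ b := by
  obtain ⟨s, hs, s₁, h₁, s₂, h₂, s₃, h₃, hli, rfl, ha, hb⟩ := hab
  have hcomb : μ s₁ • g s₁ + μ s₂ • g s₂ - μ s₃ • g s₃ =
      μ (s₁ + s₂ - s₃) • (g s₁ + g s₂ - g s₃) := by
    rw [← hμ s₁ h₁, ← hμ s₂ h₂, ← hμ s₃ h₃, ← map_add, ← map_sub, ← map_add, ← map_sub, hμ _ hs]
  have hparts := (hli.map' g (LinearMap.ker_eq_bot.mpr hg)).eq_of_smul_add_sub_eq_smul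
    (a := μ ∘ ![s₁, s₂, s₃]) hcomb
  have hconst : ∀ x ∈ ({s₁ + s₂ - s₃, s₁, s₂, s₃} : Set M), μ x = μ (s₁ + s₂ - s₃) := by
    rintro x (rfl | rfl | rfl | rfl)
    exacts [rfl, hparts 0, hparts 1, hparts 2]
  rw [hconst a ha, hconst b hb]

theorem IsDecompositionConnected.eq_of_isDecompositionStep {S : Set M}
    (hS : IsDecompositionConnected R S) {β : Type*} {f : M → β}
    (hf : ∀ a b, IsDecompositionStep R S a b → f a = f b) : ∀ u ∈ S, ∀ v ∈ S, f u = f v := by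
  intro u hu v hv
  obtain ⟨m, z, -, rfl, rfl, hz⟩ := hS u hu v hv
  have hconst : ∀ i, f (z i) = f (z 0) :=
    Fin.induction rfl fun l ih => (hf _ _ (hz l)).symm.trans ih
  exact (hconst _).symm

end DecompositionChains

theorem Set.exists_forall_eq_of_forall_eq_left_of_forall_eq_right {α β γ : Type*} [Nonempty γ]
    {S : Set α} {T : Set β} {f : α → β → γ} (hS : ∀ t ∈ T, ∀ u ∈ S, ∀ v ∈ S, f u t = f v t)
    (hT : ∀ s ∈ S, ∀ u ∈ T, ∀ v ∈ T, f s u = f s v) : ∃ c, ∀ s ∈ S, ∀ t ∈ T, f s t = c := by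
  rcases S.eq_empty_or_nonempty with rfl | ⟨s₀, hs₀⟩
  · exact ⟨Classical.arbitrary γ, by simp⟩
  rcases T.eq_empty_or_nonempty with rfl | ⟨t₀, ht₀⟩
  · exact ⟨Classical.arbitrary γ, by simp⟩
  exact ⟨f s₀ t₀, fun s hs t ht => (hS t ht s hs s₀ hs₀).trans (hT s₀ hs₀ t ht t₀ ht₀)⟩

theorem scalar_on_tensor_of_product_eigenvectors_general
    (V W : Type*) [AddCommGroup V] [Module ℂ V]
    [AddCommGroup W] [Module ℂ W]
    (S : Set V) (T : Set W)
    (hS0 : ∀ s ∈ S, s ≠ 0) (hT0 : ∀ t ∈ T, t ≠ 0)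
    (hSspan : Submodule.span ℂ S = ⊤) (hTspan : Submodule.span ℂ T = ⊤)
    (E : TensorProduct ℂ V W →ₗ[ℂ] TensorProduct ℂ V W)
    (heig : ∀ s ∈ S, ∀ t ∈ T, ∃ μ : ℂ, E (s ⊗ₜ[ℂ] t) = μ • (s ⊗ₜ[ℂ] t))
    (hSchain : ∀ u ∈ S, ∀ v ∈ S, ∃ m : ℕ, ∃ z : Fin (m + 1) → V,
      (∀ l, z l ∈ S) ∧ z 0 = u ∧ z (Fin.last m) = v ∧
      ∀ l : Fin m, ∃ s ∈ S, ∃ s₁ ∈ S, ∃ s₂ ∈ S, ∃ s₃ ∈ S,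
        LinearIndependent ℂ ![s₁, s₂, s₃] ∧ s = s₁ + s₂ - s₃ ∧
        z l.castSucc ∈ ({s, s₁, s₂, s₃} : Set V) ∧
        z l.succ ∈ ({s, s₁, s₂, s₃} : Set V))
    (hTchain : ∀ u ∈ T, ∀ v ∈ T, ∃ m : ℕ, ∃ z : Fin (m + 1) → W,
      (∀ l, z l ∈ T) ∧ z 0 = u ∧ z (Fin.last m) = v ∧
      ∀ l : Fin m, ∃ t ∈ T, ∃ t₁ ∈ T, ∃ t₂ ∈ T, ∃ t₃ ∈ T,
        LinearIndependent ℂ ![t₁, t₂, t₃] ∧ t = t₁ + t₂ - t₃ ∧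
        z l.castSucc ∈ ({t, t₁, t₂, t₃} : Set W) ∧
        z l.succ ∈ ({t, t₁, t₂, t₃} : Set W)) :
    ∃ c : ℂ, E = c • LinearMap.id := by
  choose! μ hμ using heig
  have hconstS : ∀ t ∈ T, ∀ u ∈ S, ∀ v ∈ S, μ u t = μ v t := fun t ht =>
    IsDecompositionConnected.eq_of_isDecompositionStep (R := ℂ) hSchain fun _ _ hab =>
      hab.eigenvalue_eq (g := (TensorProduct.mk ℂ V W).flip t)
        (TensorProduct.tmul_left_injective (hT0 t ht)) fun s hs => hμ s hs t ht
  have hconstT : ∀ s ∈ S, ∀ u ∈ T, ∀ v ∈ T, μ s u = μ s v := fun s hs =>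
    IsDecompositionConnected.eq_of_isDecompositionStep (R := ℂ) hTchain fun _ _ hab =>
      hab.eigenvalue_eq (g := TensorProduct.mk ℂ V W s)
        (TensorProduct.tmul_right_injective (hS0 s hs)) fun t ht => hμ s hs t ht
  obtain ⟨c, hc⟩ := Set.exists_forall_eq_of_forall_eq_left_of_forall_eq_right hconstS hconstT
  refine ⟨c, LinearMap.ext_on (TensorProduct.span_image2_tmul_eq_top hSspan hTspan) ?_⟩
  rintro _ ⟨s, hs, t, ht, rfl⟩
  simp [hμ s hs t ht, hc s hs t ht]

/-- If every simple tensor `s ⊗ t` with `s ∈ S`, `t ∈ T` (spanning sets of nonzero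
vectors) is an eigenvector of `E : V ⊗ W → V ⊗ W`, and any two elements of `S`
(resp. `T`) are connected by a chain of decompositions `s = s₁ + s₂ - s₃` into
linearly independent elements of the set, then `E` is a scalar multiple of the
identity. -/
theorem scalar_on_tensor_of_product_eigenvectors
    (V W : Type*) [AddCommGroup V] [Module ℂ V] [FiniteDimensional ℂ V]
    [AddCommGroup W] [Module ℂ W] [FiniteDimensional ℂ W]
    (S : Set V) (T : Set W)
    (hS0 : ∀ s ∈ S, s ≠ 0) (hT0 : ∀ t ∈ T, t ≠ 0)
    (hSspan : Submodule.span ℂ S = ⊤) (hTspan : Submodule.span ℂ T = ⊤)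
    (E : TensorProduct ℂ V W →ₗ[ℂ] TensorProduct ℂ V W)
    (heig : ∀ s ∈ S, ∀ t ∈ T, ∃ μ : ℂ, E (s ⊗ₜ[ℂ] t) = μ • (s ⊗ₜ[ℂ] t))
    (hSchain : ∀ u ∈ S, ∀ v ∈ S, ∃ m : ℕ, ∃ z : Fin (m + 1) → V,
      (∀ l, z l ∈ S) ∧ z 0 = u ∧ z (Fin.last m) = v ∧
      ∀ l : Fin m, ∃ s ∈ S, ∃ s₁ ∈ S, ∃ s₂ ∈ S, ∃ s₃ ∈ S,
        LinearIndependent ℂ ![s₁, s₂, s₃] ∧ s = s₁ + s₂ - s₃ ∧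
        z l.castSucc ∈ ({s, s₁, s₂, s₃} : Set V) ∧
        z l.succ ∈ ({s, s₁, s₂, s₃} : Set V))
    (hTchain : ∀ u ∈ T, ∀ v ∈ T, ∃ m : ℕ, ∃ z : Fin (m + 1) → W,
      (∀ l, z l ∈ T) ∧ z 0 = u ∧ z (Fin.last m) = v ∧
      ∀ l : Fin m, ∃ t ∈ T, ∃ t₁ ∈ T, ∃ t₂ ∈ T, ∃ t₃ ∈ T,
        LinearIndependent ℂ ![t₁, t₂, t₃] ∧ t = t₁ + t₂ - t₃ ∧
        z l.castSucc ∈ ({t, t₁, t₂, t₃} : Set W) ∧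
        z l.succ ∈ ({t, t₁, t₂, t₃} : Set W)) :
    ∃ c : ℂ, E = c • LinearMap.id :=
  scalar_on_tensor_of_product_eigenvectors_general V W S T hS0 hT0 hSspan hTspan E heig hSchain
    hTchain
end
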